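/- Let k ≥ 3, let C_k be the cycle graph on k vertices, and let G be a finite simple graph. If φ is an edge-injective homomorphism from C_k to G and σ is a graph automorphism of C_k with φ ∘ σ = φ, then σ is the identity. Consequently, since the automorphism group of C_k has order 2k, the number |EdgInj(C_k, G)| is divisible by 2k, and |EdgInj(C_k, G)| equals 2k times the number of orbits of the automorphism group of C_k acting on EdgInj(C_k, G) by precomposition (these orbits are the edge-disjoint k-cycles of G). -/

import Mathlib

/-!
An edge-injective `φ` with `φ ∘ σ = φ` forces the automorphism `σ` to map every edge of `C_k` to
itself; since every vertex of `C_k` lies on two distinct edges, `σ` fixes every vertex. So the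
automorphism group acts freely on `EdgInj(C_k, G)` and every orbit has `|Aut C_k|` elements.
An automorphism of `C_k` is determined by the image of the dart `(0, 1)`, since the image of
`m + 2` is the neighbour of the image of `m + 1` other than the image of `m`; and every dart
`(a, b)` is such an image, under `x ↦ a + (b - a) x`. So `|Aut C_k|` is the number `2k` of darts.
-/

open SimpleGraph

def EdgeInjective {V W : Type*} {H : SimpleGraph V} {G : SimpleGraph W} (φ : H →g G) : Prop :=
  ∀ e ∈ H.edgeSet, ∀ f ∈ H.edgeSet, Sym2.map φ e = Sym2.map φ f → e = f

section EdgeInjective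

variable {V W : Type*} {H : SimpleGraph V} {G : SimpleGraph W}

lemma eq_self_of_map_edge_eq_self (hH : ∀ v, (H.neighborSet v).Nontrivial) {f : V → V}
    (hf : ∀ e ∈ H.edgeSet, Sym2.map f e = e) (v : V) : f v = v := by
  obtain ⟨u, hu, w, hw, huw⟩ := hH v
  have hvu := Sym2.eq_iff.1 (hf s(v, u) hu)
  have hvw := Sym2.eq_iff.1 (hf s(v, w) hw)
  grind

lemma EdgeInjective.map_edge_eq_self {φ : H →g G} (hφ : EdgeInjective φ) {f : H →g H}
    (hf : ∀ x, φ (f x) = φ x) : ∀ e ∈ H.edgeSet, Sym2.map f e = e := fun e he =>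
  hφ _ (f.map_mem_edgeSet he) _ he (by rw [Sym2.map_map]; exact congrArg (Sym2.map · e) (funext hf))

lemma EdgeInjective.eq_self_of_comp_eq (hH : ∀ v, (H.neighborSet v).Nontrivial) {φ : H →g G}
    (hφ : EdgeInjective φ) {f : H →g H} (hf : ∀ x, φ (f x) = φ x) (x : V) : f x = x :=
  eq_self_of_map_edge_eq_self hH (hφ.map_edge_eq_self hf) x

lemma EdgeInjective.comp_iso {V' : Type*} {H' : SimpleGraph V'} {φ : H →g G}
    (hφ : EdgeInjective φ) (σ : H' ≃g H) : EdgeInjective (φ.comp σ.toHom) := by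
  intro e he f hf hef
  rw [Hom.coe_comp, ← Sym2.map_map, ← Sym2.map_map] at hef
  exact Sym2.map.injective σ.injective
    (hφ _ (σ.map_mem_edgeSet_iff.2 he) _ (σ.map_mem_edgeSet_iff.2 hf) hef)

instance : MulAction (H ≃g H) {φ : H →g G // EdgeInjective φ} where
  smul σ φ := ⟨φ.1.comp σ.symm.toHom, φ.2.comp_iso _⟩
  one_smul _ := rfl
  mul_smul _ _ _ := rfl

lemma card_edgeInjective_eq_mul_card_quot (hH : ∀ v, (H.neighborSet v).Nontrivial) :
    Nat.card {φ : H →g G // EdgeInjective φ} = Nat.card (H ≃g H) *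
      Nat.card (Quot fun φ ψ : {φ : H →g G // EdgeInjective φ} =>
        ∃ σ : H ≃g H, ∀ x, φ.1 (σ x) = ψ.1 x) := by
  have hfree (φ : {φ : H →g G // EdgeInjective φ}) : MulAction.stabilizer (H ≃g H) φ = ⊥ := by
    refine (Subgroup.eq_bot_iff_forall _).2 fun σ hσ => RelIso.ext fun x => ?_
    have hσφ (y : V) : φ.1 (σ.symm y) = φ.1 y := DFunLike.congr_fun (congrArg Subtype.val hσ) y
    exact (φ.2.eq_self_of_comp_eq hH (f := σ.symm.toHom) hσφ (σ x)).symm.trans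
      (σ.symm_apply_apply x)
  have horbit (φ ψ : {φ : H →g G // EdgeInjective φ}) :
      MulAction.orbitRel (H ≃g H) _ φ ψ ↔ ∃ σ : H ≃g H, ∀ x, φ.1 (σ x) = ψ.1 x := by
    rw [MulAction.orbitRel_apply, MulAction.mem_orbit_iff]
    refine exists_congr fun σ => ⟨fun h x => ?_, fun h => Subtype.ext (RelHom.ext fun y => ?_)⟩
    · rw [← h]
      exact congrArg ψ.1 (σ.symm_apply_apply x)
    · exact (h (σ.symm y)).symm.trans (congrArg φ.1 (σ.apply_symm_apply y))
  rw [Nat.card_congr (MulAction.selfEquivOrbitsQuotientProd hfree), Nat.card_prod, mul_comm]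
  exact congrArg _ (Nat.card_congr (Quot.congrRight horbit))

end EdgeInjective

section CycleGraph

open scoped Fin.CommRing

variable {n : ℕ}

lemma cycleGraph_adj_add_one (x : Fin (n + 2)) : (cycleGraph (n + 2)).Adj x (x + 1) :=
  cycleGraph_adj.2 (Or.inr (add_sub_cancel_left x 1))

lemma cycleGraph_sub_eq_one_or_neg_one {a b : Fin (n + 2)} (h : (cycleGraph (n + 2)).Adj a b) :
    b - a = 1 ∨ b - a = -1 := by
  rcases cycleGraph_adj.1 h with h | h
  · exact Or.inr (by rw [← neg_sub, h])
  · exact Or.inl h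

lemma cycleGraph_neighborSet_nontrivial (v : Fin (n + 3)) :
    ((cycleGraph (n + 3)).neighborSet v).Nontrivial := by
  rw [cycleGraph_neighborSet]
  refine Set.nontrivial_pair ?_
  rw [ne_eq, sub_eq_iff_eq_add, add_assoc, left_eq_add, one_add_one_eq_two]
  exact two_ne_zero

lemma cycleGraph_eq_of_adj_of_ne {v t u w : Fin (n + 2)} (ht : (cycleGraph (n + 2)).Adj v t)
    (hu : (cycleGraph (n + 2)).Adj v u) (hw : (cycleGraph (n + 2)).Adj v w) (hut : u ≠ t)
    (hwt : w ≠ t) : u = w := by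
  rw [← mem_neighborSet, cycleGraph_neighborSet] at ht hu hw
  grind

def cycleGraph.affineIso (a d : Fin (n + 2)) (hd : d = 1 ∨ d = -1) :
    cycleGraph (n + 2) ≃g cycleGraph (n + 2) where
  toFun x := a + d * x
  invFun y := d * (y - a)
  left_inv x := by rcases hd with rfl | rfl <;> ring
  right_inv y := by rcases hd with rfl | rfl <;> ring
  map_rel_iff' {x y} := by
    simp only [Equiv.coe_fn_mk, cycleGraph_adj, add_sub_add_left_eq_sub, ← mul_sub]
    rcases hd with rfl | rfl
    · simp only [one_mul]
    · simp only [neg_one_mul, neg_sub, or_comm]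

lemma cycleGraph_iso_ext {σ τ : cycleGraph (n + 3) ≃g cycleGraph (n + 3)} (h0 : σ 0 = τ 0)
    (h1 : σ 1 = τ 1) : σ = τ := by
  have hx (x : Fin (n + 3)) : x + 1 + 1 ≠ x := by
    rw [ne_eq, add_assoc, add_eq_left, one_add_one_eq_two]
    exact two_ne_zero
  have key (m : ℕ) : σ m = τ m ∧ σ (m + 1) = τ (m + 1) := by
    induction m with
    | zero => simpa using ⟨h0, h1⟩
    | succ m ih =>
      push_cast
      refine ⟨ih.2, cycleGraph_eq_of_adj_of_ne (v := σ (m + 1)) (t := σ m) ?_ ?_ ?_ ?_ ?_⟩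
      · exact σ.map_adj_iff.2 (cycleGraph_adj_add_one _).symm
      · exact σ.map_adj_iff.2 (cycleGraph_adj_add_one _)
      · exact ih.2 ▸ τ.map_adj_iff.2 (cycleGraph_adj_add_one _)
      · exact σ.injective.ne (hx _)
      · exact ih.1 ▸ τ.injective.ne (hx _)
  exact RelIso.ext fun x => by simpa using (key x).1

noncomputable def cycleGraph.isoEquivDart :
    (cycleGraph (n + 3) ≃g cycleGraph (n + 3)) ≃ (cycleGraph (n + 3)).Dart where
  toFun σ := ⟨(σ 0, σ 1), σ.map_adj_iff.2 (by simpa using cycleGraph_adj_add_one 0)⟩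
  invFun d := cycleGraph.affineIso d.fst (d.snd - d.fst) (cycleGraph_sub_eq_one_or_neg_one d.adj)
  left_inv σ := cycleGraph_iso_ext (by simp [cycleGraph.affineIso]) (by simp [cycleGraph.affineIso])
  right_inv d := Dart.ext _ _ (by simp [cycleGraph.affineIso])

lemma cycleGraph_card_iso : Nat.card (cycleGraph (n + 3) ≃g cycleGraph (n + 3)) = 2 * (n + 3) := by
  rw [Nat.card_congr cycleGraph.isoEquivDart, Nat.card_eq_fintype_card, dart_card_eq_sum_degrees]
  simp [cycleGraph_degree_three_le, mul_comm]

end CycleGraph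

theorem edgeInjective_cycle_free_action
    {V : Type*} (G : SimpleGraph V) (k : ℕ) (hk : 3 ≤ k) :
    (∀ (φ : cycleGraph k →g G), EdgeInjective φ →
      ∀ σ : cycleGraph k ≃g cycleGraph k, (∀ x, φ (σ x) = φ x) → ∀ x, σ x = x) ∧
    Nat.card (cycleGraph k ≃g cycleGraph k) = 2 * k ∧
    (2 * k ∣ Nat.card {φ : cycleGraph k →g G // EdgeInjective φ}) ∧
    Nat.card {φ : cycleGraph k →g G // EdgeInjective φ} =
      2 * k * Nat.card (Quot (fun φ ψ : {φ : cycleGraph k →g G // EdgeInjective φ} =>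
        ∃ σ : cycleGraph k ≃g cycleGraph k, ∀ x, φ.1 (σ x) = ψ.1 x)) := by
  obtain ⟨n, rfl⟩ : ∃ n, k = n + 3 := ⟨k - 3, by omega⟩
  have hH : ∀ v, ((cycleGraph (n + 3)).neighborSet v).Nontrivial :=
    cycleGraph_neighborSet_nontrivial
  have hcard := card_edgeInjective_eq_mul_card_quot (G := G) hH
  rw [cycleGraph_card_iso] at hcard
  exact ⟨fun φ hφ σ => hφ.eq_self_of_comp_eq hH (f := σ.toHom),
    cycleGraph_card_iso, hcard ▸ dvd_mul_right _ _, hcard⟩
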